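/- arXiv:2209.05403 — 2 statements merged into one kernel-verified Lean document; each statement's English description precedes it below -/
import Mathlib

section
/- Fix K' ⊆ 𝒦 with ∁K' = 𝒦∖K', let K₀ ⊆ K', and set K'' = K'∖K₀ and ∁K'' = ∁K' ∪ K₀. Then for every S ⊆ K'', I(X_{K₀∪S}; Y | X_{K'∖(K₀∪S)}, X_{∁K'}) − I(X_{K₀∪S}; Z | X_{∁K'}) = [I(X_{K₀}; Y | X_{K'∖K₀}, X_{∁K'}) − I(X_{K₀}; Z | X_{∁K'})] + [I(X_S; Y | X_{K''∖S}, X_{∁K'}) − I(X_S; Z | X_{∁K''})]. -/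
open MeasureTheory ProbabilityTheory BigOperators

/-- Shannon entropy (base 2) of a finitely-valued random variable. -/
noncomputable def entropy2 {Ω : Type*} [MeasurableSpace Ω] (μ : Measure Ω)
    {α : Type*} [Fintype α] (X : Ω → α) : ℝ :=
  - ∑ a : α, ((μ (X ⁻¹' {a})).toReal * Real.logb 2 (μ (X ⁻¹' {a})).toReal)

/-- Mutual information `I(X; Y)` (base 2) of finitely-valued random variables. -/
noncomputable def mi {Ω : Type*} [MeasurableSpace Ω] (μ : Measure Ω)
    {α β : Type*} [Fintype α] [Fintype β] (X : Ω → α) (Y : Ω → β) : ℝ :=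
  entropy2 μ X + entropy2 μ Y - entropy2 μ (fun ω => (X ω, Y ω))

/-- Conditional mutual information `I(X; Y | Z)` (base 2). -/
noncomputable def cmi {Ω : Type*} [MeasurableSpace Ω] (μ : Measure Ω)
    {α β γ : Type*} [Fintype α] [Fintype β] [Fintype γ]
    (X : Ω → α) (Y : Ω → β) (Z : Ω → γ) : ℝ :=
  entropy2 μ (fun ω => (X ω, Z ω)) + entropy2 μ (fun ω => (Y ω, Z ω))
    - entropy2 μ (fun ω => (X ω, Y ω, Z ω)) - entropy2 μ Z

/-- The tuple `X_S = (X_k)_{k ∈ S}` of a family of random variables. -/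
def tuple {Ω ι : Type*} {𝒳 : ι → Type*} (X : ∀ k, Ω → 𝒳 k) (S : Finset ι) :
    Ω → ((k : S) → 𝒳 k) :=
  fun ω k => X k ω

/-! The identity is two instances of the chain rule
`I((U₁, U₂); V | W) = I(U₁; V | U₂, W) + I(U₂; V | W)`:
for `Y` with `U₁ = X_{K₀}`, `U₂ = X_S`, `W = (X_{K' ∖ (K₀ ∪ S)}, X_{∁K'})`,
and for `Z` with `U₁ = X_S`, `U₂ = X_{K₀}`, `W = X_{∁K'}`.
Entropies only see a random variable up to injective relabelling, so a pair of tuples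
`(X_A, X_B)` may be replaced by the single tuple `X_{A ∪ B}`. -/

section Entropy

variable {Ω : Type*} [MeasurableSpace Ω] (μ : Measure Ω)
  {α β γ δ : Type*} [Fintype α] [Fintype β] [Fintype γ] [Fintype δ]

lemma entropy2_comp_of_injective (W : Ω → α) (f : α → β) (hf : Function.Injective f) :
    entropy2 μ (fun ω => f (W ω)) = entropy2 μ W := by
  classical
  unfold entropy2
  congr 1
  have h_off_range : ∀ b ∈ Finset.univ, b ∉ Finset.univ.image f →
      (μ ((fun ω => f (W ω)) ⁻¹' {b})).toReal *
        Real.logb 2 (μ ((fun ω => f (W ω)) ⁻¹' {b})).toReal = 0 := by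
    intro b _ hb
    have h_empty : (fun ω => f (W ω)) ⁻¹' {b} = ∅ :=
      Set.eq_empty_of_forall_notMem fun ω h =>
        hb (Finset.mem_image.2 ⟨W ω, Finset.mem_univ _, h⟩)
    simp [h_empty]
  rw [← Finset.sum_subset (Finset.subset_univ _) h_off_range,
    Finset.sum_image fun a _ b _ h => hf h]
  refine Finset.sum_congr rfl fun a _ => ?_
  have h_fiber : (fun ω => f (W ω)) ⁻¹' {f a} = W ⁻¹' {a} := by
    ext ω; simp [hf.eq_iff]
  rw [h_fiber]

lemma cmi_comp_left_of_injective (U : Ω → α) (V : Ω → β) (W : Ω → γ) (f : α → δ)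
    (hf : Function.Injective f) :
    cmi μ (fun ω => f (U ω)) V W = cmi μ U V W := by
  have h₁ : entropy2 μ (fun ω => (f (U ω), W ω)) = entropy2 μ (fun ω => (U ω, W ω)) :=
    entropy2_comp_of_injective μ (fun ω => (U ω, W ω)) (Prod.map f id)
      (hf.prodMap Function.injective_id)
  have h₂ : entropy2 μ (fun ω => (f (U ω), V ω, W ω))
      = entropy2 μ (fun ω => (U ω, V ω, W ω)) :=
    entropy2_comp_of_injective μ (fun ω => (U ω, V ω, W ω)) (Prod.map f id)
      (hf.prodMap Function.injective_id)
  rw [cmi, cmi, h₁, h₂]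

lemma cmi_comp_right_of_injective (U : Ω → α) (V : Ω → β) (W : Ω → γ) (f : γ → δ)
    (hf : Function.Injective f) :
    cmi μ U V (fun ω => f (W ω)) = cmi μ U V W := by
  have h₁ : entropy2 μ (fun ω => (U ω, f (W ω))) = entropy2 μ (fun ω => (U ω, W ω)) :=
    entropy2_comp_of_injective μ (fun ω => (U ω, W ω)) (Prod.map id f)
      (Function.injective_id.prodMap hf)
  have h₂ : entropy2 μ (fun ω => (V ω, f (W ω))) = entropy2 μ (fun ω => (V ω, W ω)) :=
    entropy2_comp_of_injective μ (fun ω => (V ω, W ω)) (Prod.map id f)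
      (Function.injective_id.prodMap hf)
  have h₃ : entropy2 μ (fun ω => (U ω, V ω, f (W ω)))
      = entropy2 μ (fun ω => (U ω, V ω, W ω)) :=
    entropy2_comp_of_injective μ (fun ω => (U ω, V ω, W ω)) (Prod.map id (Prod.map id f))
      (Function.injective_id.prodMap (Function.injective_id.prodMap hf))
  rw [cmi, cmi, h₁, h₂, h₃, entropy2_comp_of_injective μ W f hf]

lemma cmi_prod_left (U₁ : Ω → α) (U₂ : Ω → δ) (V : Ω → β) (W : Ω → γ) :
    cmi μ (fun ω => (U₁ ω, U₂ ω)) V W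
      = cmi μ U₁ V (fun ω => (U₂ ω, W ω)) + cmi μ U₂ V W := by
  have h_assoc : entropy2 μ (fun ω => ((U₁ ω, U₂ ω), W ω))
      = entropy2 μ (fun ω => (U₁ ω, U₂ ω, W ω)) :=
    entropy2_comp_of_injective μ (fun ω => (U₁ ω, U₂ ω, W ω)) (Equiv.prodAssoc α δ γ).symm
      (Equiv.injective _)
  have h_swap : entropy2 μ (fun ω => (V ω, U₂ ω, W ω))
      = entropy2 μ (fun ω => (U₂ ω, V ω, W ω)) :=
    entropy2_comp_of_injective μ (fun ω => (U₂ ω, V ω, W ω))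
      (((Equiv.prodAssoc δ β γ).symm.trans
        ((Equiv.prodComm δ β).prodCongr (Equiv.refl γ))).trans (Equiv.prodAssoc β δ γ))
      (Equiv.injective _)
  have h_perm : entropy2 μ (fun ω => ((U₁ ω, U₂ ω), V ω, W ω))
      = entropy2 μ (fun ω => (U₁ ω, V ω, U₂ ω, W ω)) :=
    entropy2_comp_of_injective μ (fun ω => (U₁ ω, V ω, U₂ ω, W ω))
      ((Equiv.prodAssoc α β (δ × γ)).symm.trans (Equiv.prodProdProdComm α β δ γ))
      (Equiv.injective _)
  rw [cmi, cmi, cmi, h_assoc, h_swap, h_perm]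
  ring

end Entropy

section Tuple

variable {ι : Type*} [DecidableEq ι] {𝒳 : ι → Type*}

def splitUnion (A B : Finset ι) :
    ((k : (A ∪ B : Finset ι)) → 𝒳 k) → ((k : A) → 𝒳 k) × ((k : B) → 𝒳 k) :=
  fun v => (fun k => v ⟨k.1, Finset.mem_union_left B k.2⟩,
    fun k => v ⟨k.1, Finset.mem_union_right A k.2⟩)

lemma splitUnion_injective (A B : Finset ι) :
    Function.Injective (splitUnion (𝒳 := 𝒳) A B) := by
  intro v w h
  funext ⟨k, hk⟩
  rcases Finset.mem_union.1 hk with hA | hB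
  · exact congrFun (congrArg Prod.fst h) ⟨k, hA⟩
  · exact congrFun (congrArg Prod.snd h) ⟨k, hB⟩

variable {Ω : Type*} [MeasurableSpace Ω] (μ : Measure Ω)
  [∀ k, Fintype (𝒳 k)] (X : ∀ k, Ω → 𝒳 k) {β γ : Type*} [Fintype β] [Fintype γ]

lemma cmi_tuple_union_left (A B : Finset ι) (V : Ω → β) (W : Ω → γ) :
    cmi μ (fun ω => (tuple X A ω, tuple X B ω)) V W = cmi μ (tuple X (A ∪ B)) V W :=
  cmi_comp_left_of_injective μ (tuple X (A ∪ B)) V W (splitUnion A B)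
    (splitUnion_injective A B)

lemma cmi_tuple_union_right (A B : Finset ι) (U : Ω → β) (V : Ω → γ) :
    cmi μ U V (fun ω => (tuple X A ω, tuple X B ω)) = cmi μ U V (tuple X (A ∪ B)) :=
  cmi_comp_right_of_injective μ U V (tuple X (A ∪ B)) (splitUnion A B)
    (splitUnion_injective A B)

lemma cmi_tuple_union (A B C : Finset ι) (V : Ω → β) :
    cmi μ (tuple X (A ∪ B)) V (tuple X C)
      = cmi μ (tuple X A) V (tuple X (B ∪ C)) + cmi μ (tuple X B) V (tuple X C) := by
  rw [← cmi_tuple_union_left, cmi_prod_left, cmi_tuple_union_right]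

end Tuple

theorem stmt_6_general
    {Ω : Type} [MeasurableSpace Ω] (μ : Measure Ω)
    {K : ℕ}
    {𝒳 : Fin K → Type} [∀ k, Fintype (𝒳 k)]
    (X : ∀ k, Ω → 𝒳 k)
    {𝒴 𝒵 : Type} [Fintype 𝒴] [Fintype 𝒵]
    (Y : Ω → 𝒴) (Z : Ω → 𝒵)
    (K' : Finset (Fin K)) (K₀ : Finset (Fin K)) :
    ∀ S ⊆ K' \ K₀,
      cmi μ (tuple X (K₀ ∪ S)) Y
          (fun ω => (tuple X (K' \ (K₀ ∪ S)) ω, tuple X K'ᶜ ω))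
        - cmi μ (tuple X (K₀ ∪ S)) Z (tuple X K'ᶜ)
      = (cmi μ (tuple X K₀) Y (fun ω => (tuple X (K' \ K₀) ω, tuple X K'ᶜ ω))
          - cmi μ (tuple X K₀) Z (tuple X K'ᶜ))
        + (cmi μ (tuple X S) Y
            (fun ω => (tuple X ((K' \ K₀) \ S) ω, tuple X K'ᶜ ω))
          - cmi μ (tuple X S) Z (tuple X (K'ᶜ ∪ K₀))) := by
  intro S hS
  have h_rest : (K' \ K₀) \ S = K' \ (K₀ ∪ S) := sdiff_sdiff_left
  have h_cover : S ∪ (K' \ (K₀ ∪ S)) = K' \ K₀ := by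
    rw [← h_rest, Finset.union_sdiff_of_subset hS]
  have h_Y := cmi_tuple_union μ X K₀ S (K' \ (K₀ ∪ S) ∪ K'ᶜ) Y
  have h_Z := cmi_tuple_union μ X S K₀ K'ᶜ Z
  rw [← Finset.union_assoc, h_cover] at h_Y
  rw [Finset.union_comm S K₀] at h_Z
  rw [h_rest, Finset.union_comm K'ᶜ K₀]
  simp only [cmi_tuple_union_right]
  linarith

theorem stmt_6
    {Ω : Type} [MeasurableSpace Ω] (μ : Measure Ω) [IsProbabilityMeasure μ]
    {K : ℕ} (hK : 0 < K)
    {𝒳 : Fin K → Type} [∀ k, Fintype (𝒳 k)] [∀ k, MeasurableSpace (𝒳 k)]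
    (X : ∀ k, Ω → 𝒳 k) (hX : ∀ k, Measurable (X k))
    {𝒴 𝒵 : Type} [Fintype 𝒴] [MeasurableSpace 𝒴] [Fintype 𝒵] [MeasurableSpace 𝒵]
    (Y : Ω → 𝒴) (hY : Measurable Y) (Z : Ω → 𝒵) (hZ : Measurable Z)
    (hIndep : iIndepFun X μ)
    (K' : Finset (Fin K)) (K₀ : Finset (Fin K)) (hK₀ : K₀ ⊆ K') :
    ∀ S ⊆ K' \ K₀,
      cmi μ (tuple X (K₀ ∪ S)) Y
          (fun ω => (tuple X (K' \ (K₀ ∪ S)) ω, tuple X K'ᶜ ω))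
        - cmi μ (tuple X (K₀ ∪ S)) Z (tuple X K'ᶜ)
      = (cmi μ (tuple X K₀) Y (fun ω => (tuple X (K' \ K₀) ω, tuple X K'ᶜ ω))
          - cmi μ (tuple X K₀) Z (tuple X K'ᶜ))
        + (cmi μ (tuple X S) Y
            (fun ω => (tuple X ((K' \ K₀) \ S) ω, tuple X K'ᶜ ω))
          - cmi μ (tuple X S) Z (tuple X (K'ᶜ ∪ K₀))) :=
  stmt_6_general μ X Y Z K' K₀
end

section
/- Assume I(X_1; Y|X_2) − I(X_1; Z|X_2) ≥ 0, I(X_2; Y|X_1) − I(X_2; Z|X_1) ≥ 0, and I(X_1, X_2; Y) − I(X_1, X_2; Z) ≥ 0. If I(X_1, X_2; Y) − I(X_1, X_2; Z) < min{ I(X_1; Y|X_2) − I(X_1; Z|X_2), I(X_2; Y|X_1) − I(X_2; Z|X_1) }, then 𝒜 is a strict subset of 𝒜 ∪ ℬ₁ ∪ ℬ₂; in particular there is a point of ℬ₁ ∪ ℬ₂ not belonging to 𝒜. -/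
open MeasureTheory ProbabilityTheory BigOperators

theorem stmt_17
    {Ω : Type} [MeasurableSpace Ω] (μ : Measure Ω) [IsProbabilityMeasure μ]
    {𝒳₁ 𝒳₂ 𝒴 𝒵 : Type} [Fintype 𝒳₁] [MeasurableSpace 𝒳₁] [Fintype 𝒳₂]
    [MeasurableSpace 𝒳₂] [Fintype 𝒴] [MeasurableSpace 𝒴] [Fintype 𝒵]
    [MeasurableSpace 𝒵]
    (X₁ : Ω → 𝒳₁) (X₂ : Ω → 𝒳₂) (Y : Ω → 𝒴) (Z : Ω → 𝒵)
    (hX₁ : Measurable X₁) (hX₂ : Measurable X₂)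
    (hY : Measurable Y) (hZ : Measurable Z)
    (hInd : IndepFun X₁ X₂ μ)
    (𝒜 ℬ₁ ℬ₂ : Set (ℝ × ℝ))
    (h𝒜 : 𝒜 = {p : ℝ × ℝ | 0 ≤ p.1 ∧ 0 ≤ p.2 ∧
      p.1 ≤ cmi μ X₁ Y X₂ - mi μ X₁ Z ∧
      p.2 ≤ cmi μ X₂ Y X₁ - mi μ X₂ Z ∧
      p.1 + p.2 ≤ mi μ (fun ω => (X₁ ω, X₂ ω)) Y - mi μ (fun ω => (X₁ ω, X₂ ω)) Z})
    (hℬ₁ : ℬ₁ = {p : ℝ × ℝ | p.2 = 0 ∧ 0 ≤ p.1 ∧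
      p.1 ≤ cmi μ X₁ Y X₂ - cmi μ X₁ Z X₂})
    (hℬ₂ : ℬ₂ = {p : ℝ × ℝ | p.1 = 0 ∧ 0 ≤ p.2 ∧
      p.2 ≤ cmi μ X₂ Y X₁ - cmi μ X₂ Z X₁})
    (h1 : 0 ≤ cmi μ X₁ Y X₂ - cmi μ X₁ Z X₂)
    (h2 : 0 ≤ cmi μ X₂ Y X₁ - cmi μ X₂ Z X₁)
    (h3 : 0 ≤ mi μ (fun ω => (X₁ ω, X₂ ω)) Y - mi μ (fun ω => (X₁ ω, X₂ ω)) Z)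
    (hlt : mi μ (fun ω => (X₁ ω, X₂ ω)) Y - mi μ (fun ω => (X₁ ω, X₂ ω)) Z
      < min (cmi μ X₁ Y X₂ - cmi μ X₁ Z X₂) (cmi μ X₂ Y X₁ - cmi μ X₂ Z X₁)) :
    𝒜 ⊂ 𝒜 ∪ ℬ₁ ∪ ℬ₂ ∧ ∃ p ∈ ℬ₁ ∪ ℬ₂, p ∉ 𝒜 := by
  have hlt1 := lt_of_lt_of_le hlt (min_le_left _ _)
  have hp : ((cmi μ X₁ Y X₂ - cmi μ X₁ Z X₂, (0:ℝ))) ∈ ℬ₁ := by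
    rw [hℬ₁]; exact ⟨rfl, h1, le_refl _⟩
  have hpn : ((cmi μ X₁ Y X₂ - cmi μ X₁ Z X₂, (0:ℝ))) ∉ 𝒜 := by
    rw [h𝒜]
    rintro ⟨-, -, -, -, h5⟩
    simp only at h5
    linarith
  refine ⟨⟨fun x hx => Or.inl (Or.inl hx), fun hsub => hpn (hsub (Or.inl (Or.inr hp)))⟩,
    ⟨_, Or.inl hp, hpn⟩⟩
end
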